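/- Let G be an infinite discrete semigroup that is weakly cancellative and right cancellative, and let G* = βG ∖ G denote the (closed) set of non-principal ultrafilters, which is a subsemigroup of βG. Then the topological centre of G* is empty: for every non-principal ultrafilter p ∈ G*, the map q ↦ p·q, restricted to the subspace G* of βG (with the subspace topology) and taking values in βG, is not continuous. -/

import Mathlib

/-!
STATEMENT 15.  `G` an infinite discrete semigroup, weakly cancellative and right
cancellative; `G* = βG ∖ G` the set of non-principal ultrafilters (a subsemigroup of
`βG`).  The topological centre of `G*` is empty: for every non-principal `p`, the
map `q ↦ p · q`, restricted to the subspace `G*` of `βG` and taking values in `βG`,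
is not continuous.
-/

universe u

/-- The extension to `βG` of the multiplication of a discrete semigroup `G`:
`A ∈ umul p q ↔ {s | {t | s * t ∈ A} ∈ q} ∈ p`. -/
def umul {G : Type*} [Semigroup G] (p q : Ultrafilter G) : Ultrafilter G :=
  p.bind fun s => q.map fun t => s * t

lemma mem_umul {G : Type*} [Semigroup G] {p q : Ultrafilter G} {A : Set G} :
    A ∈ umul p q ↔ {s | {t | s * t ∈ A} ∈ q} ∈ p := Iff.rfl

open Set Filter Cardinal

section Aux

variable {G : Type u} [Semigroup G] [Infinite G]

/-- The key combinatorial construction: an injective array `T : Finset G × ℕ → G`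
("columns" indexed by finite subsets `γ` of `G`) such that, letting
`A = {u * T (γ, i) : u ∈ γ}`, for every `s ∉ γ` the column `γ` meets
`{t | s * t ∈ A}` only finitely often. -/
lemma key_lemma
    (hwc : ∀ s t : G, {u : G | s * u = t}.Finite ∧ {u : G | u * s = t}.Finite)
    (hrc : ∀ u v s : G, u * s = v * s → u = v) :
    ∃ T : Finset G × ℕ → G, Function.Injective T ∧
      ∀ (s : G) (γ : Finset G), s ∉ γ →
        {i : ℕ | s * T (γ, i) ∈ {g : G | ∃ y : Finset G × ℕ, ∃ u ∈ y.1, g = u * T y}}.Finite := by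
  classical
  obtain ⟨r, wo, hord⟩ := Cardinal.ord_eq (Finset G × ℕ)
  haveI := wo
  -- cardinality facts
  have hβG : #(Finset G × ℕ) = #G := by
    rw [Cardinal.mk_prod, Cardinal.lift_uzero, Cardinal.mk_nat, Cardinal.lift_aleph0,
      Cardinal.mk_finset_of_infinite, Cardinal.mul_aleph0_eq (Cardinal.aleph0_le_mk G)]
  have hseg : ∀ b : Finset G × ℕ, #{a : Finset G × ℕ // r a b} < #G := by
    intro b
    have h1 : #{a : Finset G × ℕ // r a b} < #(Finset G × ℕ) := by
      rw [← Ordinal.card_typein]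
      exact Cardinal.card_typein_lt (r := r) b hord
    rwa [hβG] at h1
  -- the forbidden set of values, given a partial assignment `f`
  set Bad : Finset G × ℕ → ((Finset G × ℕ) → G) → Set G := fun b f =>
    (⋃ a : {a : Finset G × ℕ // r a b}, ({f a} : Set G)) ∪
    (⋃ j : {a : Finset G × ℕ // r a b} × {a : Finset G × ℕ // r a b} ×
        {a : Finset G × ℕ // r a b},
      ({v : G | ∃ u ∈ b.1, ∃ u'' ∈ (j.2.2 : Finset G × ℕ).1, ∃ s : G,
          s * f j.2.1 = u'' * f j.2.2 ∧ u * v = s * f j.1} ∪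
       {v : G | ∃ u ∈ (j.1 : Finset G × ℕ).1, ∃ u'' ∈ (j.2.2 : Finset G × ℕ).1, ∃ s : G,
          s * f j.2.1 = u'' * f j.2.2 ∧ s * v = u * f j.1})) with hBad
  -- each piece is finite
  have hpiece : ∀ (b : Finset G × ℕ) (f : (Finset G × ℕ) → G)
      (j : {a : Finset G × ℕ // r a b} × {a : Finset G × ℕ // r a b} ×
        {a : Finset G × ℕ // r a b}),
      ({v : G | ∃ u ∈ b.1, ∃ u'' ∈ (j.2.2 : Finset G × ℕ).1, ∃ s : G,
          s * f j.2.1 = u'' * f j.2.2 ∧ u * v = s * f j.1} ∪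
       {v : G | ∃ u ∈ (j.1 : Finset G × ℕ).1, ∃ u'' ∈ (j.2.2 : Finset G × ℕ).1, ∃ s : G,
          s * f j.2.1 = u'' * f j.2.2 ∧ s * v = u * f j.1}).Finite := by
    intro b f j
    apply Set.Finite.union
    · have hss : {v : G | ∃ u ∈ b.1, ∃ u'' ∈ (j.2.2 : Finset G × ℕ).1, ∃ s : G,
          s * f j.2.1 = u'' * f j.2.2 ∧ u * v = s * f j.1} ⊆
          ⋃ u ∈ (b.1 : Finset G), ⋃ u'' ∈ ((j.2.2 : Finset G × ℕ).1 : Finset G),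
            ⋃ s ∈ {s : G | s * f j.2.1 = u'' * f j.2.2}, {v : G | u * v = s * f j.1} := by
        rintro v ⟨u, hu, u'', hu'', s, h1, h2⟩
        simp only [Set.mem_iUnion]
        exact ⟨u, hu, u'', hu'', s, h1, h2⟩
      refine Set.Finite.subset ?_ hss
      apply Set.Finite.biUnion (Finset.finite_toSet _)
      intro u _
      apply Set.Finite.biUnion (Finset.finite_toSet _)
      intro u'' _
      apply Set.Finite.biUnion ((hwc (f j.2.1) (u'' * f j.2.2)).2)
      intro s _
      exact (hwc u (s * f j.1)).1
    · have hss : {v : G | ∃ u ∈ (j.1 : Finset G × ℕ).1, ∃ u'' ∈ (j.2.2 : Finset G × ℕ).1,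
          ∃ s : G, s * f j.2.1 = u'' * f j.2.2 ∧ s * v = u * f j.1} ⊆
          ⋃ u ∈ ((j.1 : Finset G × ℕ).1 : Finset G),
            ⋃ u'' ∈ ((j.2.2 : Finset G × ℕ).1 : Finset G),
            ⋃ s ∈ {s : G | s * f j.2.1 = u'' * f j.2.2}, {v : G | s * v = u * f j.1} := by
        rintro v ⟨u, hu, u'', hu'', s, h1, h2⟩
        simp only [Set.mem_iUnion]
        exact ⟨u, hu, u'', hu'', s, h1, h2⟩
      refine Set.Finite.subset ?_ hss
      apply Set.Finite.biUnion (Finset.finite_toSet _)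
      intro u _
      apply Set.Finite.biUnion (Finset.finite_toSet _)
      intro u'' _
      apply Set.Finite.biUnion ((hwc (f j.2.1) (u'' * f j.2.2)).2)
      intro s _
      exact (hwc s (u * f j.1)).1
  -- a fresh value always exists
  have fresh : ∀ (b : Finset G × ℕ) (f : (Finset G × ℕ) → G), ∃ v : G, v ∉ Bad b f := by
    intro b f
    by_cases hι : Finite {a : Finset G × ℕ // r a b}
    · have hfin : (Bad b f).Finite := by
        rw [hBad]
        apply Set.Finite.union
        · exact Set.finite_iUnion fun a => Set.finite_singleton _
        · exact Set.finite_iUnion fun j => hpiece b f j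
      exact hfin.infinite_compl.nonempty
    · haveI : Infinite {a : Finset G × ℕ // r a b} := not_finite_iff_infinite.mp hι
      have hι' : ℵ₀ ≤ #{a : Finset G × ℕ // r a b} := Cardinal.aleph0_le_mk _
      have hBlt : #(Bad b f) < #G := by
        have h1 : #(Bad b f) ≤
            #(⋃ a : {a : Finset G × ℕ // r a b}, ({f a} : Set G)) +
            #(⋃ j : {a : Finset G × ℕ // r a b} × {a : Finset G × ℕ // r a b} ×
                {a : Finset G × ℕ // r a b},
              ({v : G | ∃ u ∈ b.1, ∃ u'' ∈ (j.2.2 : Finset G × ℕ).1, ∃ s : G,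
                  s * f j.2.1 = u'' * f j.2.2 ∧ u * v = s * f j.1} ∪
               {v : G | ∃ u ∈ (j.1 : Finset G × ℕ).1, ∃ u'' ∈ (j.2.2 : Finset G × ℕ).1,
                  ∃ s : G, s * f j.2.1 = u'' * f j.2.2 ∧ s * v = u * f j.1})) := by
          rw [hBad]; exact Cardinal.mk_union_le _ _
        have h2 : #(⋃ a : {a : Finset G × ℕ // r a b}, ({f a} : Set G)) ≤
            #{a : Finset G × ℕ // r a b} := by
          refine le_trans (Cardinal.mk_iUnion_le _) ?_
          have hsup : ⨆ a : {a : Finset G × ℕ // r a b}, #({f a} : Set G) ≤ ℵ₀ := by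
            refine ciSup_le' fun a => ?_
            haveI := (Set.finite_singleton (f a)).to_subtype
            exact Cardinal.mk_le_aleph0
          refine le_trans (mul_le_mul' le_rfl hsup) ?_
          rw [Cardinal.mul_aleph0_eq hι']
        have h3 : #(⋃ j : {a : Finset G × ℕ // r a b} × {a : Finset G × ℕ // r a b} ×
                {a : Finset G × ℕ // r a b},
              ({v : G | ∃ u ∈ b.1, ∃ u'' ∈ (j.2.2 : Finset G × ℕ).1, ∃ s : G,
                  s * f j.2.1 = u'' * f j.2.2 ∧ u * v = s * f j.1} ∪
               {v : G | ∃ u ∈ (j.1 : Finset G × ℕ).1, ∃ u'' ∈ (j.2.2 : Finset G × ℕ).1,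
                  ∃ s : G, s * f j.2.1 = u'' * f j.2.2 ∧ s * v = u * f j.1})) ≤
            #{a : Finset G × ℕ // r a b} := by
          refine le_trans (Cardinal.mk_iUnion_le _) ?_
          have hsup : (⨆ j : {a : Finset G × ℕ // r a b} × {a : Finset G × ℕ // r a b} ×
              {a : Finset G × ℕ // r a b},
              #(({v : G | ∃ u ∈ b.1, ∃ u'' ∈ (j.2.2 : Finset G × ℕ).1, ∃ s : G,
                  s * f j.2.1 = u'' * f j.2.2 ∧ u * v = s * f j.1} ∪
               {v : G | ∃ u ∈ (j.1 : Finset G × ℕ).1, ∃ u'' ∈ (j.2.2 : Finset G × ℕ).1,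
                  ∃ s : G, s * f j.2.1 = u'' * f j.2.2 ∧ s * v = u * f j.1}) : Set G)) ≤
              ℵ₀ := by
            refine ciSup_le' fun j => ?_
            haveI := (hpiece b f j).to_subtype
            exact Cardinal.mk_le_aleph0
          have hmkprod : #({a : Finset G × ℕ // r a b} × {a : Finset G × ℕ // r a b} ×
              {a : Finset G × ℕ // r a b}) = #{a : Finset G × ℕ // r a b} := by
            rw [Cardinal.mk_prod, Cardinal.mk_prod]
            simp only [Cardinal.lift_id]
            rw [Cardinal.mul_eq_self hι', Cardinal.mul_eq_self hι']
          refine le_trans (mul_le_mul' le_rfl hsup) ?_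
          rw [hmkprod, Cardinal.mul_aleph0_eq hι']
        calc #(Bad b f) ≤ _ + _ := h1
          _ ≤ #{a : Finset G × ℕ // r a b} + #{a : Finset G × ℕ // r a b} := add_le_add h2 h3
          _ = #{a : Finset G × ℕ // r a b} := Cardinal.add_eq_self hι'
          _ < #G := hseg b
      by_contra hcon
      push_neg at hcon
      have hss : (Set.univ : Set G) ⊆ Bad b f := fun v _ => hcon v
      have hle := Cardinal.mk_le_mk_of_subset hss
      rw [Cardinal.mk_univ] at hle
      exact absurd (lt_of_le_of_lt hle hBlt) (lt_irrefl _)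
  -- construct T by transfinite recursion
  have wf : WellFounded r := IsWellFounded.wf
  set ext : ∀ b : Finset G × ℕ, (∀ a : Finset G × ℕ, r a b → G) → ((Finset G × ℕ) → G) :=
    fun b prior a => if h : r a b then prior a h else Classical.arbitrary G with hext
  set T : (Finset G × ℕ) → G := wf.fix (fun b prior => (fresh b (ext b prior)).choose) with hT
  have hTspec0 : ∀ b : Finset G × ℕ, T b ∉ Bad b (ext b (fun a _ => T a)) := by
    intro b
    have heq := wf.fix_eq (fun b prior => (fresh b (ext b prior)).choose) b
    rw [hT, heq]
    exact (fresh b (ext b (fun a _ =>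
      wf.fix (fun b prior => (fresh b (ext b prior)).choose) a))).choose_spec
  have hext_eval : ∀ (b a : Finset G × ℕ) (h : r a b), ext b (fun a _ => T a) a = T a := by
    intro b a h
    simp only [hext, dif_pos h]
  have hBadcongr : ∀ (b : Finset G × ℕ) (f g : (Finset G × ℕ) → G),
      (∀ a, r a b → f a = g a) → Bad b f = Bad b g := by
    intro b f g h
    rw [hBad]
    simp only
    congr 1
    · exact Set.iUnion_congr fun a => by rw [h a a.2]
    · exact Set.iUnion_congr fun j => by
        rw [h _ j.1.2, h _ j.2.1.2, h _ j.2.2.2]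
  have hTspec : ∀ b : Finset G × ℕ, T b ∉ Bad b T := by
    intro b
    have := hTspec0 b
    rwa [hBadcongr b _ T (fun a h => hext_eval b a h)] at this
  -- spec 0: injectivity along r
  have spec0 : ∀ b a : Finset G × ℕ, r a b → T b ≠ T a := by
    intro b a h hEq
    apply hTspec b
    apply Set.mem_union_left
    apply Set.mem_iUnion.mpr
    exact ⟨⟨a, h⟩, hEq⟩
  -- spec 1
  have spec1 : ∀ b x x'' y'' : Finset G × ℕ, r x b → r x'' b → r y'' b →
      ∀ u ∈ b.1, ∀ u'' ∈ y''.1, ∀ s : G,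
      s * T x'' = u'' * T y'' → u * T b ≠ s * T x := by
    intro b x x'' y'' hx hx'' hy'' u hu u'' hu'' s h1 h2
    apply hTspec b
    apply Set.mem_union_right
    apply Set.mem_iUnion.mpr
    refine ⟨⟨⟨x, hx⟩, ⟨x'', hx''⟩, ⟨y'', hy''⟩⟩, ?_⟩
    apply Set.mem_union_left
    exact ⟨u, hu, u'', hu'', s, h1, h2⟩
  -- spec 2
  have spec2 : ∀ b y x'' y'' : Finset G × ℕ, r y b → r x'' b → r y'' b →
      ∀ u ∈ y.1, ∀ u'' ∈ y''.1, ∀ s : G,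
      s * T x'' = u'' * T y'' → s * T b ≠ u * T y := by
    intro b y x'' y'' hy hx'' hy'' u hu u'' hu'' s h1 h2
    apply hTspec b
    apply Set.mem_union_right
    apply Set.mem_iUnion.mpr
    refine ⟨⟨⟨y, hy⟩, ⟨x'', hx''⟩, ⟨y'', hy''⟩⟩, ?_⟩
    apply Set.mem_union_right
    exact ⟨u, hu, u'', hu'', s, h1, h2⟩
  -- injectivity of T
  have hTinj : Function.Injective T := by
    intro a b hEq
    rcases trichotomous_of r a b with h | h | h
    · exact absurd hEq.symm (spec0 b a h)
    · exact h
    · exact absurd hEq (spec0 a b h)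
  refine ⟨T, hTinj, ?_⟩
  -- main finiteness claim
  intro s γ hsγ
  set A : Set G := {g : G | ∃ y : Finset G × ℕ, ∃ u ∈ y.1, g = u * T y} with hAdef
  by_contra hH
  have hHinf : {i : ℕ | s * T (γ, i) ∈ A}.Infinite := hH
  set H := {i : ℕ | s * T (γ, i) ∈ A} with hHdef
  -- choose witnesses
  have hchoice : ∀ i : ℕ, ∃ yu : (Finset G × ℕ) × G, i ∈ H →
      yu.2 ∈ yu.1.1 ∧ s * T (γ, i) = yu.2 * T yu.1 ∧ yu.1 ≠ (γ, i) := by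
    intro i
    by_cases hi : i ∈ H
    · obtain ⟨y, u, hu, hEq⟩ := hi
      refine ⟨(y, u), fun _ => ⟨hu, hEq, ?_⟩⟩
      rintro rfl
      exact hsγ (by rwa [hrc s u (T (γ, i)) hEq])
    · exact ⟨(Classical.arbitrary _, Classical.arbitrary _), fun h => absurd h hi⟩
  choose F hF using hchoice
  set Y : ℕ → Finset G × ℕ := fun i => (F i).1 with hY
  set U : ℕ → G := fun i => (F i).2 with hU
  have hYdef : ∀ i, Y i = (F i).1 := fun _ => rfl
  have hUdef : ∀ i, U i = (F i).2 := fun _ => rfl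
  have hF' : ∀ i, i ∈ H → U i ∈ (Y i).1 ∧ s * T (γ, i) = U i * T (Y i) ∧ Y i ≠ (γ, i) :=
    fun i hi => hF i hi
  -- step 1 : for fixed y₀ only finitely many i ∈ H have Y i = y₀
  have step1 : ∀ y₀ : Finset G × ℕ, {i : ℕ | i ∈ H ∧ Y i = y₀}.Finite := by
    intro y₀
    have hsub : {i : ℕ | i ∈ H ∧ Y i = y₀} ⊆
        (fun i => T (γ, i)) ⁻¹' (⋃ u ∈ (y₀.1 : Finset G), {v : G | s * v = u * T y₀}) := by
      rintro i ⟨hi, hy⟩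
      obtain ⟨hu, hEq, -⟩ := hF' i hi
      rw [hy] at hu hEq
      simp only [Set.mem_preimage, Set.mem_iUnion]
      exact ⟨U i, hu, hEq⟩
    have hfin : (⋃ u ∈ (y₀.1 : Finset G), {v : G | s * v = u * T y₀}).Finite := by
      apply Set.Finite.biUnion (Finset.finite_toSet _)
      intro u _
      exact (hwc s (u * T y₀)).1
    have hinj : Function.Injective (fun i : ℕ => T (γ, i)) := by
      intro i j hij
      have h := hTinj hij
      exact ((Prod.mk.injEq _ _ _ _).mp h).2
    exact (hfin.preimage hinj.injOn).subset hsub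
  -- the "later" coordinate of each witness pair
  set M : ℕ → Finset G × ℕ := fun i => if r (γ, i) (Y i) then Y i else (γ, i) with hM
  have hMdef : ∀ i, M i = if r (γ, i) (Y i) then Y i else (γ, i) := fun _ => rfl
  have hMfib : ∀ z : Finset G × ℕ, {i : ℕ | i ∈ H ∧ M i = z}.Finite := by
    intro z
    have hsub : {i : ℕ | i ∈ H ∧ M i = z} ⊆
        {i : ℕ | i ∈ H ∧ Y i = z} ∪ {i : ℕ | ((γ, i) : Finset G × ℕ) = z} := by
      rintro i ⟨hi, hMi⟩
      by_cases h : r (γ, i) (Y i)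
      · left; exact ⟨hi, by rwa [hMdef, if_pos h] at hMi⟩
      · right; rwa [hMdef, if_neg h] at hMi
    have h2 : {i : ℕ | ((γ, i) : Finset G × ℕ) = z}.Finite := by
      apply Set.Subsingleton.finite
      intro i hi j hj
      have h : ((γ, i) : Finset G × ℕ) = (γ, j) := hi.trans hj.symm
      exact ((Prod.mk.injEq _ _ _ _).mp h).2
    exact ((step1 z).union h2).subset hsub
  -- the image of H under M is infinite
  have hMim : (M '' H).Infinite := by
    intro hfin
    apply hHinf
    have hsub : H ⊆ ⋃ z ∈ M '' H, {i : ℕ | i ∈ H ∧ M i = z} := by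
      intro i hi
      exact Set.mem_biUnion (Set.mem_image_of_mem M hi) ⟨hi, rfl⟩
    exact (hfin.biUnion fun z _ => hMfib z).subset hsub
  -- pick two points, the r-minimum and another
  have hne : (M '' H).Nonempty := hMim.nonempty
  set z₁ := wf.min (M '' H) hne with hz₁def
  have hz₁ : z₁ ∈ M '' H := wf.min_mem _ hne
  have hne2 : ((M '' H) \ {z₁}).Nonempty := (hMim.diff (Set.finite_singleton z₁)).nonempty
  obtain ⟨z₂, hz₂, hz₂ne'⟩ := hne2
  have hz₂ne : z₂ ≠ z₁ := hz₂ne'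
  have hr12 : r z₁ z₂ := by
    rcases trichotomous_of r z₁ z₂ with h | h | h
    · exact h
    · exact absurd h.symm hz₂ne
    · exact absurd h (wf.not_lt_min (M '' H) hz₂)
  obtain ⟨i₁, hi₁H, hi₁⟩ := hz₁
  obtain ⟨i₂, hi₂H, hi₂⟩ := hz₂
  obtain ⟨hu₁, hEq₁, hne₁⟩ := hF' i₁ hi₁H
  obtain ⟨hu₂, hEq₂, hne₂⟩ := hF' i₂ hi₂H
  -- both components of witness i₁ are r-below z₂
  have hbelow : ∀ w : Finset G × ℕ, (w = z₁ ∨ r w z₁) → r w z₂ := by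
    rintro w (rfl | h)
    · exact hr12
    · exact IsTrans.trans _ _ _ h hr12
  have hx₁ : r (γ, i₁) z₂ := by
    apply hbelow
    by_cases h : r (γ, i₁) (Y i₁)
    · right; rw [← hi₁, hMdef, if_pos h]; exact h
    · left; rw [← hi₁, hMdef, if_neg h]
  have hy₁ : r (Y i₁) z₂ := by
    apply hbelow
    by_cases h : r (γ, i₁) (Y i₁)
    · left; rw [← hi₁, hMdef, if_pos h]
    · right
      rw [← hi₁, hMdef, if_neg h]
      rcases trichotomous_of r (Y i₁) (γ, i₁) with h' | h' | h'
      · exact h'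
      · exact absurd h' hne₁
      · exact absurd h' h
  -- now apply the specs at the witness of i₂
  by_cases hc : r (γ, i₂) (Y i₂)
  · -- M i₂ = Y i₂ = z₂
    have hz₂eq : Y i₂ = z₂ := by rw [← hi₂, hMdef, if_pos hc]
    rw [hz₂eq] at hEq₂ hu₂
    exact spec1 z₂ (γ, i₂) (γ, i₁) (Y i₁) (hz₂eq ▸ hc) hx₁ hy₁
      (U i₂) hu₂ (U i₁) hu₁ s hEq₁ hEq₂.symm
  · -- M i₂ = (γ, i₂) = z₂
    have hz₂eq : ((γ, i₂) : Finset G × ℕ) = z₂ := by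
      rw [← hi₂, hMdef, if_neg hc]
    have hyx : r (Y i₂) (γ, i₂) := by
      rcases trichotomous_of r (Y i₂) (γ, i₂) with h' | h' | h'
      · exact h'
      · exact absurd h' hne₂
      · exact absurd h' hc
    rw [hz₂eq] at hyx
    have hEq₂' : s * T z₂ = U i₂ * T (Y i₂) := hz₂eq ▸ hEq₂
    exact spec2 z₂ (Y i₂) (γ, i₁) (Y i₁) hyx (hz₂eq ▸ hx₁) (hz₂eq ▸ hy₁)
      (U i₂) hu₂ (U i₁) hu₁ s hEq₁ hEq₂'

end Aux

theorem stmt15 {G : Type u} [Semigroup G] [Infinite G]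
    (hwc : ∀ s t : G, {u : G | s * u = t}.Finite ∧ {u : G | u * s = t}.Finite)
    (hrc : ∀ u v s : G, u * s = v * s → u = v)
    (p : Ultrafilter G) (hp : p ∉ Set.range (pure : G → Ultrafilter G)) :
    ¬ Continuous (fun q : {r : Ultrafilter G // r ∉ Set.range (pure : G → Ultrafilter G)} =>
        umul p (q : Ultrafilter G)) := by
  classical
  intro hcont
  obtain ⟨T, hTinj, hkey⟩ := key_lemma hwc hrc
  set A : Set G := {g : G | ∃ y : Finset G × ℕ, ∃ u ∈ y.1, g = u * T y} with hAdef
  -- the column ultrafilters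
  set rU : Finset G → Ultrafilter G :=
    fun γ => (Filter.hyperfilter ℕ).map (fun i => T (γ, i)) with hrU
  have hcolinj : ∀ γ : Finset G, Function.Injective (fun i : ℕ => T (γ, i)) := by
    intro γ i j hij
    have := hTinj hij
    exact ((Prod.mk.injEq _ _ _ _).mp this).2
  have hfin_nmem : ∀ (γ : Finset G) (C : Set G), C.Finite → C ∉ rU γ := by
    intro γ C hC hmem
    have h2 : ((fun i : ℕ => T (γ, i)) ⁻¹' C) ∈ Filter.hyperfilter ℕ :=
      Ultrafilter.mem_map.mp hmem
    exact (hC.preimage (hcolinj γ).injOn).notMem_hyperfilter h2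
  have hrU_np : ∀ γ : Finset G, rU γ ∉ Set.range (pure : G → Ultrafilter G) := by
    rintro γ ⟨a, ha⟩
    have h1 : {a} ∈ rU γ := by
      rw [← ha]; exact Ultrafilter.mem_pure.mpr rfl
    exact hfin_nmem γ {a} (Set.finite_singleton a) h1
  -- the ultrafilter on columns
  set uu : Ultrafilter (Finset G) := Ultrafilter.of Filter.atTop with huu
  have huu_le : (uu : Filter (Finset G)) ≤ Filter.atTop := Ultrafilter.of_le _
  have hmem_uu : ∀ s : G, {γ : Finset G | s ∈ γ} ∈ uu := by
    intro s
    apply huu_le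
    refine Filter.mem_of_superset (Filter.Ici_mem_atTop {s}) ?_
    intro γ hγ
    have : {s} ⊆ γ := hγ
    exact Finset.singleton_subset_iff.mp this
  -- the limit point q
  obtain ⟨q, -, hq⟩ := isCompact_univ.ultrafilter_le_nhds
    (Ultrafilter.map rU uu) (by simp)
  have hq' : Filter.Tendsto rU (uu : Filter (Finset G)) (nhds q) := by
    rw [Ultrafilter.coe_map] at hq
    exact hq
  have hqmem : ∀ C : Set G, {γ : Finset G | C ∈ rU γ} ∈ uu → C ∈ q := by
    intro C hC
    exact (ultrafilter_isClosed_basic C).mem_of_tendsto hq'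
      (by filter_upwards [hC] with γ h using h)
  have hq_np : q ∉ Set.range (pure : G → Ultrafilter G) := by
    rintro ⟨a, ha⟩
    have h1 : {a} ∈ q := by rw [← ha]; exact Ultrafilter.mem_pure.mpr rfl
    have h2 := hq'.eventually ((ultrafilter_isOpen_basic {a}).mem_nhds h1)
    obtain ⟨γ, hγ⟩ := h2.exists
    exact hfin_nmem γ {a} (Set.finite_singleton a) hγ
  -- tendsto in the subtype
  have hsub : Filter.Tendsto
      (fun γ : Finset G =>
        (⟨rU γ, hrU_np γ⟩ : {r : Ultrafilter G // r ∉ Set.range (pure : G → Ultrafilter G)}))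
      (uu : Filter (Finset G)) (nhds ⟨q, hq_np⟩) :=
    tendsto_subtype_rng.mpr hq'
  -- A belongs to p · q
  have hA1 : A ∈ umul p q := by
    rw [mem_umul]
    have huniv : {s : G | {t : G | s * t ∈ A} ∈ q} = Set.univ := by
      apply Set.eq_univ_of_forall
      intro s
      apply hqmem
      refine Filter.mem_of_superset (hmem_uu s) ?_
      intro γ hγ
      show {t : G | s * t ∈ A} ∈ rU γ
      apply Ultrafilter.mem_map.mpr
      have : ((fun i : ℕ => T (γ, i)) ⁻¹' {t : G | s * t ∈ A}) = Set.univ := by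
        apply Set.eq_univ_of_forall
        intro i
        exact ⟨(γ, i), s, hγ, rfl⟩
      rw [this]
      exact Filter.univ_mem
    rw [huniv]
    exact Filter.univ_mem
  -- continuity transfers this to some column ultrafilter
  have h2 := ((hcont.tendsto ⟨q, hq_np⟩).comp hsub).eventually
    ((ultrafilter_isOpen_basic A).mem_nhds hA1)
  obtain ⟨γ₀, hγ₀⟩ := h2.exists
  have hPs : {s : G | {t : G | s * t ∈ A} ∈ rU γ₀} ∈ p := mem_umul.mp hγ₀
  have hsub2 : {s : G | {t : G | s * t ∈ A} ∈ rU γ₀} ⊆ (↑γ₀ : Set G) := by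
    intro s hs
    by_contra hs'
    have hfinH := hkey s γ₀ hs'
    have hpre : ((fun i : ℕ => T (γ₀, i)) ⁻¹' {t : G | s * t ∈ A}) ∈ Filter.hyperfilter ℕ :=
      Ultrafilter.mem_map.mp hs
    exact hfinH.notMem_hyperfilter hpre
  have hγ₀p : (↑γ₀ : Set G) ∈ p := Filter.mem_of_superset hPs hsub2
  obtain ⟨a, -, hpa⟩ := Ultrafilter.eq_pure_of_finite_mem (γ₀.finite_toSet) hγ₀p
  exact hp ⟨a, hpa.symm⟩
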